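/- For every countable subgroup K of ℝ/ℤ and every subgroup H₀ of Homeo₊([0,1]), the unrestricted wreath product H₀ ≀ K = (∏_{k∈K} H₀) ⋊ K embeds into Homeo₊(S^1). -/

import Mathlib

open Function Set

notation "S¹" => AddCircle (1:ℝ)

/-- The group structure on self-homeomorphisms, with `(f * g) x = f (g x)`. -/
instance homeoGroup (X : Type*) [TopologicalSpace X] : Group (X ≃ₜ X) where
  mul f g := g.trans f
  one := Homeomorph.refl X
  inv := Homeomorph.symm
  mul_assoc a b c := Homeomorph.ext fun _ => rfl
  one_mul a := Homeomorph.ext fun _ => rfl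
  mul_one a := Homeomorph.ext fun _ => rfl
  inv_mul_cancel a := Homeomorph.ext fun x => a.symm_apply_apply x

/-- `F` is a lift of the circle homeomorphism `f` through the projection `ℝ → ℝ/ℤ`. -/
def IsLift (f : S¹ ≃ₜ S¹) (F : CircleDeg1Lift) : Prop :=
  ∀ x : ℝ, f (x : S¹) = ((F x : ℝ) : S¹)

/-- A circle homeomorphism is orientation-preserving iff it admits a monotone degree-one
lift to the real line. -/
def OrientationPreserving (f : S¹ ≃ₜ S¹) : Prop := ∃ F : CircleDeg1Lift, IsLift f F

open Classical in
/-- Poincaré's rotation number of a circle homeomorphism, as an element of `ℝ/ℤ`;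
the translation number of any lift, reduced mod 1. -/
noncomputable def rot (f : S¹ ≃ₜ S¹) : S¹ :=
  if h : OrientationPreserving f then ((h.choose.translationNumber : ℝ) : S¹) else 0

/-- The fixed-point set of a circle homeomorphism. -/
def FixSet (f : S¹ ≃ₜ S¹) : Set S¹ := {s | f s = s}

/-- A subgroup has a non-abelian free subgroup iff the free group of rank 2 embeds into it. -/
def HasFreeSubgroup {Γ : Type*} [Group Γ] (G : Subgroup Γ) : Prop :=
  ∃ φ : FreeGroup (Fin 2) →* Γ, Function.Injective φ ∧ ∀ w, φ w ∈ G

/-- The shift action of a subgroup `K ≤ ℝ/ℤ` on the unrestricted direct product of copies of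
a group `H` indexed by `K`, by translating coordinates. -/
noncomputable def shiftAut (K : AddSubgroup S¹) (H : Type*) [Group H] :
    Multiplicative ↥K →* MulAut (↥K → H) where
  toFun k :=
    { toFun := fun f x => f (x - Multiplicative.toAdd k)
      invFun := fun f x => f (x + Multiplicative.toAdd k)
      left_inv := fun f => funext fun x => by simp
      right_inv := fun f => funext fun x => by simp
      map_mul' := fun f g => rfl }
  map_one' := by ext f x; simp
  map_mul' := fun a b => by ext f x; simp [sub_sub]

/-!
Denjoy's blow-up. Give the points of the countable group `K` positive weights of total mass
`< 1` and insert, at every real lift `t` of a point of `K`, an interval of length the weight of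
`t`. The blown-up line is a set of pairs `(t, s)` of the lexicographic plane, and
`(t, s) ↦ (1 - ∑ w) t + ∑ₓ wₓ ⌈t - x⌉ + s wₜ` maps it order-isomorphically onto `ℝ`, commuting
with integer translations; it is onto because the staircase `∑ₓ wₓ ⌈t - x⌉` is left-continuous
with right limits jumping exactly by `wₜ` (dominated convergence). An element `(f, k)` of the
wreath product acts on the blown-up line by `(t, s) ↦ (t + ℓ, f_{t+ℓ} s)`, where `ℓ` lifts `k`;
conjugated to `ℝ` these are degree-one lifts, well defined up to integer translation, so they
descend to orientation-preserving circle homeomorphisms. An element acting trivially on the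
circle acts on the blown-up line as an integer translation, which forces `k = 0` and every
`f_x` to be the identity.
-/

open Filter Topology

lemma AddCircle.coe_eq_coe_iff_exists_int {a b : ℝ} : (a : S¹) = b ↔ ∃ n : ℤ, a = b + n := by
  rw [← sub_eq_zero, ← AddCircle.coe_sub, AddCircle.coe_eq_zero_iff]
  simp only [zsmul_one, sub_eq_iff_eq_add', eq_comm]

lemma AddCircle.coe_add_intCast (t : ℝ) (n : ℤ) : ((t + n : ℝ) : S¹) = t :=
  AddCircle.coe_eq_coe_iff_exists_int.2 ⟨n, rfl⟩

noncomputable def circleRep (x : S¹) : ℝ := (AddCircle.equivIco 1 0 x : ℝ)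

lemma coe_circleRep (x : S¹) : (circleRep x : S¹) = x := AddCircle.coe_equivIco

lemma circleRep_mem_Ico (x : S¹) : circleRep x ∈ Ico (0 : ℝ) 1 := by
  unfold circleRep
  simpa only [zero_add] using (AddCircle.equivIco 1 0 x).2

lemma Monotone.exists_le_le_of_tendsto {f g : ℝ → ℝ} (hf : Monotone f)
    (hl : ∀ t, Tendsto f (𝓝[<] t) (𝓝 (f t))) (hr : ∀ t, Tendsto f (𝓝[>] t) (𝓝 (g t)))
    {y : ℝ} (hlo : ∃ a, f a ≤ y) (hhi : ∃ b, y < f b) : ∃ t, f t ≤ y ∧ y ≤ g t := by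
  obtain ⟨b, hb⟩ := hhi
  have hbdd : BddAbove {t | f t ≤ y} := ⟨b, fun t ht => by
    by_contra! hbt
    exact (hb.trans_le (hf hbt.le)).not_ge ht⟩
  refine ⟨sSup {t | f t ≤ y}, _root_.le_of_tendsto (hl _) ?_, _root_.ge_of_tendsto (hr _) ?_⟩
  · refine eventually_nhdsWithin_of_forall fun t ht => ?_
    obtain ⟨t', ht', htt'⟩ := exists_lt_of_lt_csSup hlo ht
    exact (hf htt'.le).trans ht'
  · refine eventually_nhdsWithin_of_forall fun t ht => ?_
    by_contra! hyt
    exact (le_csSup hbdd hyt.le).not_gt ht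

def blowUp (A : Set S¹) : Set (ℝ ×ₗ ℝ) :=
  {p | (ofLex p).2 ∈ Icc 0 1 ∧ (((ofLex p).1 : S¹) ∉ A → (ofLex p).2 = 0)}

structure GapWeights (A : Set S¹) where
  weight : A → ℝ
  weight_pos : ∀ x, 0 < weight x
  summable : Summable weight
  tsum_lt_one : ∑' x, weight x < 1

namespace GapWeights

lemma nonempty_of_countable (A : Set S¹) [Countable A] : Nonempty (GapWeights A) := by
  obtain ⟨e, he⟩ := Countable.exists_injective_nat A
  have hgeom : Summable fun n : ℕ => (1 / 2 : ℝ) ^ n / 4 := summable_geometric_two.div_const 4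
  refine ⟨⟨fun x => (1 / 2 : ℝ) ^ e x / 4, fun x => by positivity, hgeom.comp_injective he, ?_⟩⟩
  calc ∑' x, (1 / 2 : ℝ) ^ e x / 4 ≤ ∑' n : ℕ, (1 / 2 : ℝ) ^ n / 4 :=
        tsum_comp_le_tsum_of_inj hgeom (fun n => by positivity) he
    _ < 1 := by rw [tsum_div_const, tsum_geometric_two]; norm_num

variable {A : Set S¹} (w : GapWeights A)

noncomputable def stair (t : ℝ) : ℝ := ∑' x, w.weight x * ⌈t - circleRep x⌉

open Classical in
noncomputable def gap (q : S¹) : ℝ := if h : q ∈ A then w.weight ⟨q, h⟩ else 0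

-- Left end of the interval inserted at `t`. The slope `1 - ∑ w` compensates the total jump `∑ w`
-- of `stair` over a period, so that `gapStart (t + 1) = gapStart t + 1`.
noncomputable def gapStart (t : ℝ) : ℝ := (1 - ∑' x, w.weight x) * t + w.stair t

lemma abs_ceil_sub_circleRep_le (t : ℝ) (x : S¹) : |(⌈t - circleRep x⌉ : ℝ)| ≤ |t| + 1 := by
  obtain ⟨h0, h1⟩ := circleRep_mem_Ico x
  have := Int.le_ceil (t - circleRep x)
  have := Int.ceil_lt_add_one (t - circleRep x)
  rw [abs_le]
  constructor <;> linarith [neg_abs_le t, le_abs_self t]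

lemma summable_stair (t : ℝ) : Summable fun x => w.weight x * ⌈t - circleRep x⌉ :=
  (w.summable.mul_right (|t| + 1)).of_norm_bounded fun x => by
    rw [Real.norm_eq_abs, abs_mul, abs_of_pos (w.weight_pos x)]
    exact mul_le_mul_of_nonneg_left (abs_ceil_sub_circleRep_le t x) (w.weight_pos x).le

lemma stair_mono : Monotone w.stair := fun s t hst =>
  (w.summable_stair s).tsum_le_tsum (fun x => mul_le_mul_of_nonneg_left
    (Int.cast_le.2 (Int.ceil_mono (sub_le_sub_right hst _))) (w.weight_pos x).le)
    (w.summable_stair t)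

lemma stair_add_intCast (t : ℝ) (n : ℤ) :
    w.stair (t + n) = w.stair t + n * ∑' x, w.weight x := by
  have hterm : ∀ x, w.weight x * ⌈t + n - circleRep x⌉ =
      w.weight x * ⌈t - circleRep x⌉ + n * w.weight x := fun x => by
    rw [add_sub_right_comm, Int.ceil_add_intCast]
    push_cast
    ring
  rw [stair, tsum_congr hterm, (w.summable_stair t).tsum_add (w.summable.mul_left (n : ℝ)),
    tsum_mul_left, stair]

lemma tendsto_stair {l : Filter ℝ} {t₀ : ℝ} (hl : l ≤ 𝓝 t₀) {c : A → ℤ}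
    (hc : ∀ x : A, ∀ᶠ t in l, ⌈t - circleRep x⌉ = c x) :
    Tendsto w.stair l (𝓝 (∑' x, w.weight x * c x)) := by
  refine tendsto_tsum_of_dominated_convergence (bound := fun x => w.weight x * (|t₀| + 2))
    (w.summable.mul_right _) (fun x => tendsto_const_nhds.congr' ?_) ?_
  · filter_upwards [hc x] with t ht
    rw [ht]
  · filter_upwards [hl (Ioo_mem_nhds (sub_one_lt t₀) (lt_add_one t₀))] with t ht x
    rw [Real.norm_eq_abs, abs_mul, abs_of_pos (w.weight_pos x)]
    refine mul_le_mul_of_nonneg_left ((abs_ceil_sub_circleRep_le t x).trans ?_)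
      (w.weight_pos x).le
    have : |t| ≤ |t₀| + 1 :=
      abs_le.2 ⟨by linarith [neg_abs_le t₀, ht.1], by linarith [le_abs_self t₀, ht.2]⟩
    linarith

lemma tendsto_stair_nhdsLT (t : ℝ) : Tendsto w.stair (𝓝[<] t) (𝓝 (w.stair t)) := by
  refine w.tendsto_stair nhdsWithin_le_nhds fun x => tendsto_pure.1 <|
    (tendsto_ceil_left_pure_ceil _).comp <| tendsto_nhdsWithin_iff.2
      ⟨((continuous_sub_right _).tendsto t).mono_left nhdsWithin_le_nhds, ?_⟩
  exact eventually_nhdsWithin_of_forall fun s hs => mem_Iic.2 (sub_le_sub_right (mem_Iio.1 hs).le _)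

lemma sub_circleRep_mem_range_intCast_iff (t : ℝ) (x : S¹) :
    t - circleRep x ∈ range ((↑) : ℤ → ℝ) ↔ (t : S¹) = x := by
  conv_rhs => rw [← coe_circleRep x]
  rw [AddCircle.coe_eq_coe_iff_exists_int]
  exact exists_congr fun n => by constructor <;> intro h <;> linarith

open Classical in
lemma floor_add_one_sub_ceil (t : ℝ) (x : S¹) :
    ((⌊t - circleRep x⌋ + 1 : ℤ) : ℝ) - ⌈t - circleRep x⌉ = if x = t then 1 else 0 := by
  split_ifs with hx
  · obtain ⟨n, hn⟩ := (sub_circleRep_mem_range_intCast_iff t x).2 hx.symm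
    rw [← hn, Int.floor_intCast, Int.ceil_intCast]
    push_cast
    ring
  · rw [(Int.ceil_eq_floor_add_one_iff_notMem _).2 fun h =>
      hx ((sub_circleRep_mem_range_intCast_iff t x).1 h).symm, sub_self]

lemma tsum_ite_eq_gap (q : S¹) [DecidablePred fun x : A => (x : S¹) = q] :
    ∑' x : A, (if (x : S¹) = q then w.weight x else 0) = w.gap q := by
  unfold gap
  split_ifs with hq
  · rw [tsum_eq_single ⟨q, hq⟩ fun x hx => if_neg fun h => hx (Subtype.ext h)]
    exact if_pos rfl
  · exact (tsum_congr fun x : A => if_neg fun (h : (x : S¹) = q) => hq (h ▸ x.2)).trans tsum_zero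

lemma tendsto_stair_nhdsGT (t : ℝ) :
    Tendsto w.stair (𝓝[>] t) (𝓝 (w.stair t + w.gap t)) := by
  classical
  have hlim := w.tendsto_stair nhdsWithin_le_nhds fun x => tendsto_pure.1 <|
    (tendsto_ceil_right_pure_floor_add_one (t - circleRep x)).comp <| tendsto_nhdsWithin_iff.2
      ⟨((continuous_sub_right _).tendsto t).mono_left nhdsWithin_le_nhds,
        eventually_nhdsWithin_of_forall fun s hs => mem_Ioi.2 (sub_lt_sub_right (mem_Ioi.1 hs) _)⟩
  have hterm : ∀ x : A, w.weight x * ((⌊t - circleRep x⌋ + 1 : ℤ) : ℝ) =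
      w.weight x * ⌈t - circleRep x⌉ + if (x : S¹) = t then w.weight x else 0 := fun x => by
    rw [← sub_eq_iff_eq_add', ← mul_sub, floor_add_one_sub_ceil]
    split_ifs <;> simp
  have hsum : Summable fun x : A => if (x : S¹) = t then w.weight x else 0 :=
    w.summable.of_norm_bounded fun x => by
      split_ifs
      · exact (Real.norm_of_nonneg (w.weight_pos x).le).le
      · simpa using (w.weight_pos x).le
  rwa [tsum_congr hterm, (w.summable_stair t).tsum_add hsum, w.tsum_ite_eq_gap] at hlim

lemma gap_nonneg (q : S¹) : 0 ≤ w.gap q := by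
  unfold gap
  split_ifs
  exacts [(w.weight_pos _).le, le_rfl]

lemma gap_pos {q : S¹} (hq : q ∈ A) : 0 < w.gap q := by
  rw [gap, dif_pos hq]
  exact w.weight_pos _

lemma gap_eq_zero {q : S¹} (hq : q ∉ A) : w.gap q = 0 := by
  rw [gap, dif_neg hq]

lemma one_sub_tsum_pos : 0 < 1 - ∑' x, w.weight x := sub_pos.2 w.tsum_lt_one

lemma gapStart_strictMono : StrictMono w.gapStart :=
  (strictMono_mul_left_of_pos w.one_sub_tsum_pos).add_monotone w.stair_mono

lemma gapStart_add_intCast (t : ℝ) (n : ℤ) : w.gapStart (t + n) = w.gapStart t + n := by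
  simp only [gapStart, stair_add_intCast]
  ring

lemma tendsto_gapStart_nhdsLT (t : ℝ) : Tendsto w.gapStart (𝓝[<] t) (𝓝 (w.gapStart t)) :=
  (((continuous_const_mul _).tendsto t).mono_left nhdsWithin_le_nhds).add
    (w.tendsto_stair_nhdsLT t)

lemma tendsto_gapStart_nhdsGT (t : ℝ) :
    Tendsto w.gapStart (𝓝[>] t) (𝓝 (w.gapStart t + w.gap t)) := by
  rw [gapStart, add_assoc]
  exact (((continuous_const_mul _).tendsto t).mono_left nhdsWithin_le_nhds).add
    (w.tendsto_stair_nhdsGT t)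

lemma gapStart_add_gap_lt {t t' : ℝ} (h : t < t') : w.gapStart t + w.gap t < w.gapStart t' := by
  have hm : t < (t + t') / 2 := by linarith
  refine lt_of_le_of_lt (le_of_tendsto (w.tendsto_gapStart_nhdsGT t) ?_)
    (w.gapStart_strictMono (show (t + t') / 2 < t' by linarith))
  filter_upwards [Ioo_mem_nhdsGT hm] with u hu
  exact w.gapStart_strictMono.monotone hu.2.le

noncomputable def embed (p : ℝ ×ₗ ℝ) : ℝ :=
  w.gapStart (ofLex p).1 + (ofLex p).2 * w.gap (ofLex p).1

lemma embed_strictMonoOn : StrictMonoOn w.embed (blowUp A) := by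
  rintro p ⟨hp, -⟩ q ⟨hq, hqA⟩ hpq
  rcases Prod.Lex.lt_iff.1 hpq with h | ⟨h, h'⟩
  · calc w.embed p ≤ w.gapStart (ofLex p).1 + w.gap (ofLex p).1 := by
          unfold embed
          gcongr
          exact mul_le_of_le_one_left (w.gap_nonneg _) hp.2
      _ < w.gapStart (ofLex q).1 := w.gapStart_add_gap_lt h
      _ ≤ w.embed q := le_add_of_nonneg_right (mul_nonneg hq.1 (w.gap_nonneg _))
  · have hA : ((ofLex q).1 : S¹) ∈ A := by
      by_contra hA
      linarith [hqA hA, hp.1]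
    unfold embed
    rw [h]
    gcongr
    exact w.gap_pos hA

lemma exists_embed_eq (y : ℝ) : ∃ p ∈ blowUp A, w.embed p = y := by
  have hint (n : ℤ) : w.gapStart n = w.gapStart 0 + n := by
    simpa using w.gapStart_add_intCast 0 n
  obtain ⟨t, hty, hyt⟩ := w.gapStart_strictMono.monotone.exists_le_le_of_tendsto
    w.tendsto_gapStart_nhdsLT w.tendsto_gapStart_nhdsGT (y := y)
    ⟨⌊y - w.gapStart 0⌋, by linarith [hint ⌊y - w.gapStart 0⌋, Int.floor_le (y - w.gapStart 0)]⟩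
    ⟨((⌊y - w.gapStart 0⌋ + 1 : ℤ) : ℝ), by
      rw [hint]; push_cast; linarith [Int.lt_floor_add_one (y - w.gapStart 0)]⟩
  -- If `gap t = 0` then `y = gapStart t`, and the quotient is `0` (division by zero).
  refine ⟨toLex (t, (y - w.gapStart t) / w.gap t), ?_⟩
  by_cases hA : (t : S¹) ∈ A
  · have hgap := w.gap_pos hA
    refine ⟨⟨⟨div_nonneg (sub_nonneg.2 hty) hgap.le, (div_le_one hgap).2 (by linarith)⟩,
      fun h => absurd hA h⟩, ?_⟩
    show w.gapStart t + (y - w.gapStart t) / w.gap t * w.gap t = y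
    rw [div_mul_cancel₀ _ hgap.ne']
    ring
  · rw [w.gap_eq_zero hA, div_zero] at *
    refine ⟨⟨⟨le_rfl, zero_le_one⟩, fun _ => rfl⟩, ?_⟩
    simp only [embed, ofLex_toLex, zero_mul, add_zero]
    linarith

noncomputable def collapse (y : ℝ) : ℝ ×ₗ ℝ := invFunOn w.embed (blowUp A) y

lemma collapse_mem (y : ℝ) : w.collapse y ∈ blowUp A := invFunOn_mem (w.exists_embed_eq y)

lemma embed_collapse (y : ℝ) : w.embed (w.collapse y) = y := invFunOn_eq (w.exists_embed_eq y)

lemma collapse_embed {p : ℝ ×ₗ ℝ} (hp : p ∈ blowUp A) : w.collapse (w.embed p) = p :=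
  w.embed_strictMonoOn.injOn.leftInvOn_invFunOn hp

lemma collapse_mono : Monotone w.collapse := fun y y' h =>
  (w.embed_strictMonoOn.le_iff_le (w.collapse_mem y) (w.collapse_mem y')).1
    (by rwa [embed_collapse, embed_collapse])

lemma embed_translate (p : ℝ ×ₗ ℝ) (n : ℤ) :
    w.embed (toLex ((ofLex p).1 + n, (ofLex p).2)) = w.embed p + n := by
  simp only [embed, ofLex_toLex, AddCircle.coe_add_intCast, gapStart_add_intCast]
  ring

end GapWeights

namespace CircleDeg1Lift

noncomputable def descend (F : CircleDeg1Lift) : S¹ → S¹ :=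
  Quotient.map' F fun a b hab => Quotient.exact' (show ((F a : ℝ) : S¹) = F b by
    obtain ⟨n, hn⟩ := AddCircle.coe_eq_coe_iff_exists_int.1 (Quotient.sound' hab : (a : S¹) = b)
    rw [hn, F.map_add_int, AddCircle.coe_add_intCast])

lemma descend_coe (F : CircleDeg1Lift) (y : ℝ) : F.descend y = F y := rfl

lemma continuous_descend {F : CircleDeg1Lift} (hF : Continuous F) : Continuous F.descend :=
  hF.quotient_map' _

end CircleDeg1Lift

abbrev WreathProduct (K : AddSubgroup S¹) (H : Type*) [Group H] :=
  (K → H) ⋊[shiftAut K H] Multiplicative K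

section WreathAction

variable {K : AddSubgroup S¹} {H₀ : Subgroup (ℝ ≃ₜ ℝ)}
  (hH : ∀ g ∈ H₀, Monotone ⇑g ∧ MapsTo g (Icc 0 1) (Icc 0 1))

def IsRotationLift (a : WreathProduct K H₀) (ℓ : ℝ) : Prop :=
  (ℓ : S¹) = Multiplicative.toAdd a.right

lemma IsRotationLift.coe_mem {a : WreathProduct K H₀} {ℓ : ℝ} (hℓ : IsRotationLift a ℓ) :
    (ℓ : S¹) ∈ K :=
  hℓ ▸ (Multiplicative.toAdd a.right).2

lemma IsRotationLift.mul {a b : WreathProduct K H₀} {ℓ ℓ' : ℝ} (hℓ : IsRotationLift a ℓ)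
    (hℓ' : IsRotationLift b ℓ') : IsRotationLift (a * b) (ℓ' + ℓ) := by
  rw [IsRotationLift, AddCircle.coe_add, hℓ, hℓ', add_comm]
  rfl

lemma IsRotationLift.inv {a : WreathProduct K H₀} {ℓ : ℝ} (hℓ : IsRotationLift a ℓ) :
    IsRotationLift a⁻¹ (-ℓ) := by
  rw [IsRotationLift, AddCircle.coe_neg, hℓ]
  rfl

lemma isRotationLift_one_intCast (n : ℤ) : IsRotationLift (1 : WreathProduct K H₀) n := by
  rw [IsRotationLift, SemidirectProduct.one_right, toAdd_one, AddSubgroup.coe_zero]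
  simp

lemma isRotationLift_circleRep (a : WreathProduct K H₀) :
    IsRotationLift a (circleRep (Multiplicative.toAdd a.right : K)) :=
  coe_circleRep _

-- Over a point outside `K` the fibre is `{0}`, acted on trivially.
open Classical in
noncomputable def fiberMap (f : K → H₀) (q : S¹) : ℝ → ℝ :=
  if h : q ∈ K then ⇑(f ⟨q, h⟩ : ℝ ≃ₜ ℝ) else id

lemma fiberMap_one (q : S¹) : fiberMap (1 : K → H₀) q = id := by
  unfold fiberMap
  split_ifs <;> rfl

lemma fiberMap_mul_left {a b : WreathProduct K H₀} {ℓ : ℝ} (hℓ : IsRotationLift a ℓ) (u : ℝ) :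
    fiberMap (a * b).left u = fiberMap a.left u ∘ fiberMap b.left ↑(u - ℓ) := by
  unfold fiberMap
  by_cases hu : (u : S¹) ∈ K
  · have hu' : ((u - ℓ : ℝ) : S¹) ∈ K := by
      rw [AddCircle.coe_sub]
      exact K.sub_mem hu hℓ.coe_mem
    have hshift : (⟨u, hu⟩ - Multiplicative.toAdd a.right : K) = ⟨↑(u - ℓ), hu'⟩ :=
      Subtype.ext (show (u : S¹) - _ = ((u - ℓ : ℝ) : S¹) by rw [AddCircle.coe_sub, hℓ])
    rw [dif_pos hu, dif_pos hu', dif_pos hu, SemidirectProduct.mul_left]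
    show ⇑((a.left ⟨u, hu⟩ * b.left (⟨u, hu⟩ - Multiplicative.toAdd a.right) : H₀) : ℝ ≃ₜ ℝ) = _
    rw [hshift]
    rfl
  · have hu' : ((u - ℓ : ℝ) : S¹) ∉ K := fun h => hu <| by
      simpa [AddCircle.coe_sub] using K.add_mem h hℓ.coe_mem
    rw [dif_neg hu, dif_neg hu', dif_neg hu]
    rfl

include hH in
lemma monotone_fiberMap (f : K → H₀) (q : S¹) : Monotone (fiberMap f q) := by
  unfold fiberMap
  split_ifs
  exacts [(hH _ (f _).2).1, monotone_id]

include hH in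
lemma mapsTo_fiberMap (f : K → H₀) (q : S¹) : MapsTo (fiberMap f q) (Icc 0 1) (Icc 0 1) := by
  unfold fiberMap
  split_ifs
  exacts [(hH _ (f _).2).2, mapsTo_id _]

noncomputable def liftAct (a : WreathProduct K H₀) (ℓ : ℝ) (p : ℝ ×ₗ ℝ) : ℝ ×ₗ ℝ :=
  toLex ((ofLex p).1 + ℓ, fiberMap a.left ((ofLex p).1 + ℓ : ℝ) (ofLex p).2)

lemma liftAct_liftAct {a : WreathProduct K H₀} {ℓ : ℝ} (hℓ : IsRotationLift a ℓ)
    (b : WreathProduct K H₀) (ℓ' : ℝ) (p : ℝ ×ₗ ℝ) :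
    liftAct a ℓ (liftAct b ℓ' p) = liftAct (a * b) (ℓ' + ℓ) p := by
  simp only [liftAct, ofLex_toLex, fiberMap_mul_left hℓ, comp_apply, ← add_assoc,
    add_sub_cancel_right]

include hH in
lemma liftAct_mem {a : WreathProduct K H₀} {ℓ : ℝ} (hℓ : IsRotationLift a ℓ) {p : ℝ ×ₗ ℝ}
    (hp : p ∈ blowUp K) : liftAct a ℓ p ∈ blowUp K := by
  refine ⟨mapsTo_fiberMap hH _ _ hp.1, fun h => ?_⟩
  simp only [liftAct, ofLex_toLex, SetLike.mem_coe] at h ⊢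
  have hp' : ((ofLex p).1 : S¹) ∉ K := fun h' => h <| by
    rw [AddCircle.coe_add]
    exact K.add_mem h' hℓ.coe_mem
  rw [fiberMap, dif_neg h, hp.2 hp']
  rfl

include hH in
lemma monotone_liftAct (a : WreathProduct K H₀) (ℓ : ℝ) : Monotone (liftAct a ℓ) := by
  intro p q hpq
  rcases Prod.Lex.le_iff.1 hpq with h | ⟨h, h'⟩
  · exact (Prod.Lex.lt_iff.2 (Or.inl (add_lt_add_left h ℓ))).le
  · refine Prod.Lex.le_iff.2 (Or.inr ⟨by simp [liftAct, h], ?_⟩)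
    simp only [liftAct, ofLex_toLex, h]
    exact monotone_fiberMap hH _ _ h'

end WreathAction

namespace GapWeights

variable {K : AddSubgroup S¹} {H₀ : Subgroup (ℝ ≃ₜ ℝ)} (w : GapWeights K)

noncomputable def conjAct (a : WreathProduct K H₀) (ℓ y : ℝ) : ℝ :=
  w.embed (liftAct a ℓ (w.collapse y))

lemma embed_liftAct_one_intCast (p : ℝ ×ₗ ℝ) (n : ℤ) :
    w.embed (liftAct (1 : WreathProduct K H₀) n p) = w.embed p + n := by
  rw [liftAct, SemidirectProduct.one_left, fiberMap_one]
  exact w.embed_translate p n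

lemma conjAct_one_intCast (n : ℤ) (y : ℝ) : w.conjAct (1 : WreathProduct K H₀) n y = y + n := by
  rw [conjAct, embed_liftAct_one_intCast, embed_collapse]

variable (hH : ∀ g ∈ H₀, Monotone ⇑g ∧ MapsTo g (Icc 0 1) (Icc 0 1))
include hH

lemma conjAct_conjAct {a b : WreathProduct K H₀} {ℓ ℓ' : ℝ} (hℓ : IsRotationLift a ℓ)
    (hℓ' : IsRotationLift b ℓ') (y : ℝ) :
    w.conjAct a ℓ (w.conjAct b ℓ' y) = w.conjAct (a * b) (ℓ' + ℓ) y := by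
  rw [conjAct, conjAct, w.collapse_embed (liftAct_mem hH hℓ' (w.collapse_mem y)),
    liftAct_liftAct hℓ]
  rfl

lemma conjAct_add_intCast_right {a : WreathProduct K H₀} {ℓ : ℝ} (hℓ : IsRotationLift a ℓ)
    (n : ℤ) (y : ℝ) : w.conjAct a (ℓ + n) y = w.conjAct a ℓ y + n := by
  rw [← w.conjAct_one_intCast n (w.conjAct a ℓ y),
    w.conjAct_conjAct hH (isRotationLift_one_intCast n) hℓ, one_mul]

lemma conjAct_add_intCast {a : WreathProduct K H₀} {ℓ : ℝ} (hℓ : IsRotationLift a ℓ)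
    (y : ℝ) (n : ℤ) : w.conjAct a ℓ (y + n) = w.conjAct a ℓ y + n := by
  rw [← w.conjAct_one_intCast n y, w.conjAct_conjAct hH hℓ (isRotationLift_one_intCast n),
    mul_one, add_comm, w.conjAct_add_intCast_right hH hℓ]

lemma monotone_conjAct {a : WreathProduct K H₀} {ℓ : ℝ} (hℓ : IsRotationLift a ℓ) :
    Monotone (w.conjAct a ℓ) := fun _ _ h =>
  w.embed_strictMonoOn.monotoneOn (liftAct_mem hH hℓ (w.collapse_mem _))
    (liftAct_mem hH hℓ (w.collapse_mem _)) (monotone_liftAct hH a ℓ (w.collapse_mono h))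

lemma continuous_conjAct {a : WreathProduct K H₀} {ℓ : ℝ} (hℓ : IsRotationLift a ℓ) :
    Continuous (w.conjAct a ℓ) := by
  refine (w.monotone_conjAct hH hℓ).continuous_of_surjective fun y => ⟨w.conjAct a⁻¹ (-ℓ) y, ?_⟩
  rw [w.conjAct_conjAct hH hℓ hℓ.inv, mul_inv_cancel, neg_add_cancel]
  simpa using w.conjAct_one_intCast 0 y

noncomputable def circleLift (a : WreathProduct K H₀) : CircleDeg1Lift where
  toFun := w.conjAct a (circleRep (Multiplicative.toAdd a.right : K))
  monotone' := w.monotone_conjAct hH (isRotationLift_circleRep a)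
  map_add_one' y := by
    simpa using w.conjAct_add_intCast hH (isRotationLift_circleRep a) y 1

lemma descend_circleLift_coe {a : WreathProduct K H₀} {ℓ : ℝ} (hℓ : IsRotationLift a ℓ)
    (y : ℝ) : (w.circleLift hH a).descend y = (w.conjAct a ℓ y : S¹) := by
  obtain ⟨n, hn⟩ :=
    AddCircle.coe_eq_coe_iff_exists_int.1 (hℓ.trans (isRotationLift_circleRep a).symm)
  rw [CircleDeg1Lift.descend_coe, hn, w.conjAct_add_intCast_right hH (isRotationLift_circleRep a),
    AddCircle.coe_add_intCast]
  rfl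

lemma descend_circleLift_mul (a b : WreathProduct K H₀) (q : S¹) :
    (w.circleLift hH (a * b)).descend q =
      (w.circleLift hH a).descend ((w.circleLift hH b).descend q) := by
  induction q using QuotientAddGroup.induction_on with
  | H y =>
    have ha := isRotationLift_circleRep a
    have hb := isRotationLift_circleRep b
    rw [w.descend_circleLift_coe hH (ha.mul hb), ← w.conjAct_conjAct hH ha hb,
      w.descend_circleLift_coe hH hb, w.descend_circleLift_coe hH ha]

lemma descend_circleLift_one (q : S¹) : (w.circleLift hH 1).descend q = q := by
  induction q using QuotientAddGroup.induction_on with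
  | H y =>
    rw [w.descend_circleLift_coe hH (isRotationLift_one_intCast 0)]
    simpa using congrArg ((↑) : ℝ → S¹) (w.conjAct_one_intCast 0 y)

noncomputable def toCircleHomeomorph : WreathProduct K H₀ →* (S¹ ≃ₜ S¹) :=
  MonoidHom.mk'
    (fun a =>
      { toFun := (w.circleLift hH a).descend
        invFun := (w.circleLift hH a⁻¹).descend
        left_inv := fun q => by
          rw [← w.descend_circleLift_mul hH, inv_mul_cancel, w.descend_circleLift_one hH]
        right_inv := fun q => by
          rw [← w.descend_circleLift_mul hH, mul_inv_cancel, w.descend_circleLift_one hH]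
        continuous_toFun := CircleDeg1Lift.continuous_descend
          (w.continuous_conjAct hH (isRotationLift_circleRep a))
        continuous_invFun := CircleDeg1Lift.continuous_descend
          (w.continuous_conjAct hH (isRotationLift_circleRep a⁻¹)) })
    fun a b => Homeomorph.ext (w.descend_circleLift_mul hH a b)

lemma eq_one_of_descend_circleLift_eq_self
    (hfix : ∀ g ∈ H₀, ∀ x, x ∉ Ioo (0 : ℝ) 1 → g x = x) {a : WreathProduct K H₀}
    (ha : ∀ q, (w.circleLift hH a).descend q = q) : a = 1 := by
  set ℓ := circleRep (Multiplicative.toAdd a.right : K)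
  have hℓ := isRotationLift_circleRep a
  have htrans : ∀ p ∈ blowUp K, ∃ n : ℤ, liftAct a ℓ p = liftAct (1 : WreathProduct K H₀) n p := by
    intro p hp
    obtain ⟨n, hn⟩ := AddCircle.coe_eq_coe_iff_exists_int.1
      ((w.descend_circleLift_coe hH hℓ _).symm.trans (ha (w.embed p)))
    refine ⟨n, w.embed_strictMonoOn.injOn (liftAct_mem hH hℓ hp)
      (liftAct_mem hH (isRotationLift_one_intCast n) hp) ?_⟩
    rw [embed_liftAct_one_intCast, ← hn, conjAct, w.collapse_embed hp]
  have hℓ0 : (ℓ : S¹) = 0 := by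
    obtain ⟨n, hn⟩ := htrans (toLex (0, 0)) ⟨⟨le_rfl, zero_le_one⟩, fun _ => rfl⟩
    have := congrArg (fun p => (ofLex p).1) hn
    simp only [liftAct, ofLex_toLex, zero_add] at this
    rw [this]
    simp
  have hright : a.right = 1 := toAdd_eq_zero.1 (Subtype.ext (hℓ.symm.trans hℓ0))
  refine SemidirectProduct.ext (funext fun x => Subtype.ext (Homeomorph.ext fun s => ?_)) hright
  show ((a.left x : H₀) : ℝ ≃ₜ ℝ) s = s
  by_cases hs : s ∈ Icc (0 : ℝ) 1
  · obtain ⟨n, hn⟩ := htrans (toLex (circleRep x, s))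
      ⟨hs, fun h => absurd (show ((circleRep x : ℝ) : S¹) ∈ (K : Set S¹) by
        rw [coe_circleRep]; exact x.2) h⟩
    have := congrArg (fun p => (ofLex p).2) hn
    simp only [liftAct, ofLex_toLex, SemidirectProduct.one_left, fiberMap_one, id] at this
    rwa [AddCircle.coe_add, coe_circleRep, hℓ0, add_zero, fiberMap, dif_pos x.2] at this
  · exact hfix _ (a.left x).2 s fun h => hs (Ioo_subset_Icc_self h)

end GapWeights

/-- For every countable subgroup `K ≤ ℝ/ℤ` and every group `H₀` of orientation-preserving
homeomorphisms of the unit interval (modelled as monotone homeomorphisms of `ℝ` supported in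
`(0,1)`), the unrestricted wreath product `H₀ ≀ K = (∏_{k ∈ K} H₀) ⋊ K` embeds into
`Homeo₊(S¹)`. -/
theorem stmt16 (K : AddSubgroup S¹) (hK : Countable ↥K)
    (H₀ : Subgroup (ℝ ≃ₜ ℝ))
    (hH₀ : ∀ g ∈ H₀, Monotone ⇑g ∧ ∀ x : ℝ, x ∉ Set.Ioo (0:ℝ) 1 → g x = x) :
    ∃ ψ : (↥K → ↥H₀) ⋊[shiftAut K ↥H₀] Multiplicative ↥K →* (S¹ ≃ₜ S¹),
      Function.Injective ψ ∧ ∀ w, OrientationPreserving (ψ w) := by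
  have : Countable (K : Set S¹) := hK
  obtain ⟨w⟩ := GapWeights.nonempty_of_countable (K : Set S¹)
  have hH : ∀ g ∈ H₀, Monotone ⇑g ∧ MapsTo g (Icc 0 1) (Icc 0 1) := fun g hg => by
    obtain ⟨hmono, hfix⟩ := hH₀ g hg
    refine ⟨hmono, ?_⟩
    simpa [hfix 0 (by simp), hfix 1 (by simp)] using hmono.mapsTo_Icc (a := 0) (b := 1)
  refine ⟨w.toCircleHomeomorph hH, (injective_iff_map_eq_one _).2 fun a ha => ?_,
    fun a => ⟨w.circleLift hH a, fun x => rfl⟩⟩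
  exact w.eq_one_of_descend_circleLift_eq_self hH (fun g hg => (hH₀ g hg).2)
    fun q => congrArg (fun f : S¹ ≃ₜ S¹ => f q) ha
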